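/- arXiv:2511.07008 — 2 statements merged into one kernel-verified Lean document; each statement's English description precedes it below -/
import Mathlib

section
/- Let H be a rectilinear hole (closed region bounded by a closed rectilinear arc) and let e be a horizontal edge of its boundary. If e is a clockwise-leftward edge, then points of the interior of H sufficiently close to the relative interior of e lie above e; if e is a clockwise-rightward edge, then such interior points lie below e. -/
open Set

/-- A clockwise-oriented simple rectilinear polygon with `n + 1` vertices,
listed in the order of a clockwise traversal of its boundary. -/
structure RectPolygon (n : ℕ) where
  v : Fin (n + 1) → ℝ × ℝ
  inj : Function.Injective v
  axis : ∀ i : Fin (n + 1), (v i).1 = (v (i + 1)).1 ∨ (v i).2 = (v (i + 1)).2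
  nondegen : ∀ i : Fin (n + 1), v i ≠ v (i + 1)
  alternate : ∀ i : Fin (n + 1), ((v i).1 = (v (i + 1)).1) ↔ ¬((v (i + 1)).1 = (v (i + 2)).1)
  simple : ∀ i j : Fin (n + 1), j ≠ i → j ≠ i + 1 → j + 1 ≠ i →
      Disjoint (segment ℝ (v i) (v (i + 1))) (segment ℝ (v j) (v (j + 1)))
  clockwise : (∑ i : Fin (n + 1), ((v i).1 * (v (i + 1)).2 - (v (i + 1)).1 * (v i).2)) < 0

/-- Clockwise distance from edge `s` to edge `i` (cyclically). -/
def cpos {m : ℕ} (s i : Fin m) : ℕ := ((i - s : Fin m) : ℕ)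

namespace RectPolygon

variable {n : ℕ} (P : RectPolygon n)

/-- The `i`-th boundary edge, from vertex `i` to vertex `i+1`. -/
def edge (i : Fin (n + 1)) : Set (ℝ × ℝ) := segment ℝ (P.v i) (P.v (i + 1))

/-- The boundary of the polygon: a closed rectilinear arc. -/
def boundary : Set (ℝ × ℝ) := ⋃ i, P.edge i

def Horiz (i : Fin (n + 1)) : Prop := (P.v i).2 = (P.v (i + 1)).2
def Vert (i : Fin (n + 1)) : Prop := (P.v i).1 = (P.v (i + 1)).1

/-- Clockwise-rightward edge. -/
def Rightward (i : Fin (n + 1)) : Prop := P.Horiz i ∧ (P.v i).1 < (P.v (i + 1)).1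
/-- Clockwise-leftward edge. -/
def Leftward (i : Fin (n + 1)) : Prop := P.Horiz i ∧ (P.v (i + 1)).1 < (P.v i).1
def Upward (i : Fin (n + 1)) : Prop := P.Vert i ∧ (P.v i).2 < (P.v (i + 1)).2
def Downward (i : Fin (n + 1)) : Prop := P.Vert i ∧ (P.v (i + 1)).2 < (P.v i).2

/-- A leftmost edge: a vertical edge whose two neighbouring horizontal edges lie to its
right and with the interior of the hole to its right (in clockwise convention: an upward
edge preceded by a leftward edge and followed by a rightward edge). -/
def LeftmostEdge (i : Fin (n + 1)) : Prop := P.Upward i ∧ P.Leftward (i - 1) ∧ P.Rightward (i + 1)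
/-- A right notch: a vertical edge whose two neighbouring horizontal edges lie to its right
but with the interior of the hole to its left. -/
def RightNotch (i : Fin (n + 1)) : Prop := P.Downward i ∧ P.Leftward (i - 1) ∧ P.Rightward (i + 1)
/-- A rightmost edge. -/
def RightmostEdge (i : Fin (n + 1)) : Prop := P.Downward i ∧ P.Rightward (i - 1) ∧ P.Leftward (i + 1)
/-- A left notch. -/
def LeftNotch (i : Fin (n + 1)) : Prop := P.Upward i ∧ P.Rightward (i - 1) ∧ P.Leftward (i + 1)
/-- A topmost edge. -/
def TopmostEdge (i : Fin (n + 1)) : Prop := P.Rightward i ∧ P.Upward (i - 1) ∧ P.Downward (i + 1)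
/-- A top notch. -/
def TopNotch (i : Fin (n + 1)) : Prop := P.Rightward i ∧ P.Downward (i - 1) ∧ P.Upward (i + 1)

/-- A falling corner at vertex `v (i + 1)`: preceding edge downward, succeeding edge rightward. -/
def FallingCornerAt (i : Fin (n + 1)) : Prop := P.Downward i ∧ P.Rightward (i + 1)

/-- A BLS-hole: no right notches, no top notches, and at most one falling corner. -/
def BLS : Prop := (∀ i, ¬ P.RightNotch i) ∧ (∀ i, ¬ P.TopNotch i) ∧
  (∀ i j, P.FallingCornerAt i → P.FallingCornerAt j → i = j)

/-- A nice hole: a BLS-hole without left notches. -/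
def Nice : Prop := P.BLS ∧ ∀ i, ¬ P.LeftNotch i

/-- The closed region bounded by the polygon: boundary plus inner (bounded) region. -/
def region : Set (ℝ × ℝ) :=
  P.boundary ∪ {p | p ∉ P.boundary ∧ Bornology.IsBounded (connectedComponentIn P.boundaryᶜ p)}


def xMinEdge (i : Fin (n + 1)) : ℝ := min (P.v i).1 (P.v (i + 1)).1

/-- Point on edge `i` at parameter `t ∈ [0,1]`. -/
def ptOn (i : Fin (n + 1)) (t : ℝ) : ℝ × ℝ := P.v i + t • (P.v (i + 1) - P.v i)

def yMax : ℝ := Finset.univ.sup' Finset.univ_nonempty fun i => (P.v i).2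
def yMin : ℝ := Finset.univ.inf' Finset.univ_nonempty fun i => (P.v i).2

/-- The lower boundary: edges strictly between the leftmost edge `l` and the rightmost
edge `r` in anticlockwise order. -/
def FBset (l r : Fin (n + 1)) : Set (ℝ × ℝ) :=
  ⋃ a ∈ {a : Fin (n + 1) | 1 ≤ cpos a l ∧ cpos a l < cpos r l}, P.edge a

/-- The upper boundary: edges strictly between `l` and `r` in clockwise order. -/
def FTset (l r : Fin (n + 1)) : Set (ℝ × ℝ) :=
  ⋃ a ∈ {a : Fin (n + 1) | 1 ≤ cpos l a ∧ cpos l a < cpos l r}, P.edge a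

/-- The upper vertices of the left notches. -/
def QPoints : Set (ℝ × ℝ) := {p | ∃ i, P.LeftNotch i ∧ p = P.v (i + 1)}

end RectPolygon

/-!
Fix `δ > 0` below every edge length and below half the distance between any two non-adjacent
edges. On either side `σ = ±1` of the boundary, the open `δ`-strips along the edges avoid the
boundary, and consecutive ones overlap once they are prolonged past the vertices where the
boundary turns away from that side; so all of them lie in one component `C σ` of the complement.

Suppose `C 1`, on the left of the clockwise traversal, were bounded. On a vertical line avoiding
the vertices, the region above the topmost crossing edge and the region below the bottommost one
are unbounded, so the topmost edge is leftward and the bottommost rightward; hence `C (-1)` is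
unbounded and differs from `C 1`, which forces consecutive crossing edges to alternate in
direction. Then `∑ ± y`, summed over the crossing edges with `+` for rightward ones, is `≤ 0` on
almost every vertical line, whereas its integral over the abscissa is
`∑ₖ (xₖ₊₁ - xₖ) yₖ`, which is positive for a clockwise polygon. So `C 1` is unbounded, points
just to the left of an edge are outside the hole, and interior points near a horizontal edge lie
on its right: above a leftward edge, below a rightward one.
-/

open Topology MeasureTheory

open Fin.NatCast in
theorem Fin.reflTransGen_of_forall_succ {m : ℕ} {r : Fin (m + 1) → Fin (m + 1) → Prop}
    (h : ∀ k, r k (k + 1)) (i j : Fin (m + 1)) : Relation.ReflTransGen r i j := by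
  have key : ∀ l : ℕ, Relation.ReflTransGen r i (i + l) := by
    intro l
    induction l with
    | zero => simpa using .refl
    | succ l ih => exact ih.tail (by simpa [add_assoc] using h (i + l))
  simpa using key (j - i : Fin (m + 1))

lemma abs_eq_one_of_sq_eq_one {a : ℝ} (h : a ^ 2 = 1) : |a| = 1 :=
  (sq_eq_sq₀ (abs_nonneg a) zero_le_one).1 (by rw [sq_abs, h, one_pow])

theorem Finset.sum_mul_nonpos_of_alternating {ι : Type*} (K : Finset ι) (y s : ι → ℝ)
    (hy : Set.InjOn y K)
    (hbot : ∀ k ∈ K, (∀ j ∈ K, y k ≤ y j) → s k = 1)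
    (htop : ∀ k ∈ K, (∀ j ∈ K, y j ≤ y k) → s k = -1)
    (halt : ∀ k ∈ K, ∀ k' ∈ K, y k < y k' → (∀ j ∈ K, y j ∉ Set.Ioo (y k) (y k')) → s k' = -s k) :
    ∑ k ∈ K, s k * y k ≤ 0 := by
  classical
  induction K using Finset.strongInduction with
  | H K ih =>
  rcases K.eq_empty_or_nonempty with rfl | hne
  · simp
  -- the two lowest elements carry the signs `1` and `-1`; the rest is handled by induction
  obtain ⟨k₁, hk₁, hmin₁⟩ := K.exists_min_image y hne
  have hne₂ : (K.filter fun j => y k₁ < y j).Nonempty := by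
    by_contra h
    have := htop k₁ hk₁ fun j hj => not_lt.1 fun hlt => h ⟨j, Finset.mem_filter.2 ⟨hj, hlt⟩⟩
    linarith [hbot k₁ hk₁ hmin₁]
  obtain ⟨k₂, hk₂, hmin₂⟩ := (K.filter fun j => y k₁ < y j).exists_min_image y hne₂
  obtain ⟨hk₂K, h12⟩ := Finset.mem_filter.1 hk₂
  have hs₂ : s k₂ = -1 := by
    rw [halt k₁ hk₁ k₂ hk₂K h12 (fun j hj hjI => ?_), hbot k₁ hk₁ hmin₁]
    exact not_le.2 hjI.2 (hmin₂ j (Finset.mem_filter.2 ⟨hj, hjI.1⟩))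
  set K' := K.filter fun j => y k₂ < y j
  have hK' : ∀ {j}, j ∈ K' ↔ j ∈ K ∧ y k₂ < y j := Finset.mem_filter
  have hgap : ∀ k ∈ K', ∀ k', (∀ j ∈ K', y j ∉ Set.Ioo (y k) (y k')) →
      ∀ j ∈ K, y j ∉ Set.Ioo (y k) (y k') := fun k hk k' hgap j hj hjI =>
    hgap j (hK'.2 ⟨hj, (hK'.1 hk).2.trans hjI.1⟩) hjI
  have hrest : ∑ k ∈ K', s k * y k ≤ 0 := by
    refine ih K' (Finset.filter_ssubset.2 ⟨k₁, hk₁, not_lt.2 h12.le⟩)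
      (hy.mono (Finset.coe_subset.2 (Finset.filter_subset _ _)))
      (fun k hk hbot' => ?_) (fun k hk htop' => htop k (hK'.1 hk).1 fun j hj => ?_)
      (fun k hk k' hk' hlt hgap' => halt k (hK'.1 hk).1 k' (hK'.1 hk').1 hlt (hgap k hk k' hgap'))
    · rw [halt k₂ hk₂K k (hK'.1 hk).1 (hK'.1 hk).2 (fun j hj hjI => ?_), hs₂, neg_neg]
      exact not_le.2 hjI.2 (hbot' j (hK'.2 ⟨hj, hjI.1⟩))
    · by_cases hj' : y k₂ < y j
      · exact htop' j (hK'.2 ⟨hj, hj'⟩)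
      · linarith [(hK'.1 hk).2]
  have hlow : K.filter (fun j => ¬ y k₂ < y j) = {k₁, k₂} := by
    ext j
    simp only [Finset.mem_filter, Finset.mem_insert, Finset.mem_singleton, not_lt]
    constructor
    · rintro ⟨hj, hle⟩
      rcases (hmin₁ j hj).lt_or_eq with h | h
      · exact Or.inr (hy hj hk₂K (le_antisymm hle (hmin₂ j (Finset.mem_filter.2 ⟨hj, h⟩))))
      · exact Or.inl (hy hj hk₁ h.symm)
    · rintro (rfl | rfl)
      exacts [⟨hk₁, h12.le⟩, ⟨hk₂K, le_rfl⟩]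
  rw [← Finset.sum_filter_add_sum_filter_not K (fun j => y k₂ < y j), hlow,
    Finset.sum_pair (fun h => h12.ne (congrArg y h)), hbot k₁ hk₁ hmin₁, hs₂]
  linarith

namespace RectPolygon

noncomputable section

def rot90 (p : ℝ × ℝ) : ℝ × ℝ := (-p.2, p.1)

lemma rot90_rot90 (p : ℝ × ℝ) : rot90 (rot90 p) = -p := by simp [rot90, Prod.ext_iff]

lemma rot90_smul (c : ℝ) (p : ℝ × ℝ) : rot90 (c • p) = c • rot90 p := by simp [rot90]

variable {n : ℕ} (P : RectPolygon n)

def edgeLen (k : Fin (n + 1)) : ℝ :=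
  |(P.v (k + 1)).1 - (P.v k).1| + |(P.v (k + 1)).2 - (P.v k).2|

def dir (k : Fin (n + 1)) : ℝ × ℝ :=
  (SignType.sign ((P.v (k + 1)).1 - (P.v k).1), SignType.sign ((P.v (k + 1)).2 - (P.v k).2))

/-- `turn k = 1` if the boundary turns left at `v (k + 1)`, and `-1` if it turns right. -/
def turn (k : Fin (n + 1)) : ℝ :=
  (P.dir k).1 * (P.dir (k + 1)).2 - (P.dir k).2 * (P.dir (k + 1)).1

lemma edgeLen_pos (k : Fin (n + 1)) : 0 < P.edgeLen k := by
  have hne : P.v (k + 1) - P.v k ≠ 0 := sub_ne_zero.2 (P.nondegen k).symm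
  by_cases hx : (P.v (k + 1)).1 - (P.v k).1 = 0
  · have hy : (P.v (k + 1)).2 - (P.v k).2 ≠ 0 := fun hy =>
      hne (Prod.ext (by simpa using hx) (by simpa using hy))
    exact add_pos_of_nonneg_of_pos (abs_nonneg _) (abs_pos.2 hy)
  · exact add_pos_of_pos_of_nonneg (abs_pos.2 hx) (abs_nonneg _)

lemma v_succ (k : Fin (n + 1)) : P.v (k + 1) = P.v k + P.edgeLen k • P.dir k := by
  rcases P.axis k with h | h <;> simp [edgeLen, dir, h, Prod.ext_iff, abs_mul_sign]

lemma dir_cases (k : Fin (n + 1)) :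
    P.dir k = (1, 0) ∨ P.dir k = (-1, 0) ∨ P.dir k = (0, 1) ∨ P.dir k = (0, -1) := by
  have hne : P.v (k + 1) - P.v k ≠ 0 := sub_ne_zero.2 (P.nondegen k).symm
  rcases P.axis k with h | h
  · have hy : (P.v (k + 1)).2 - (P.v k).2 ≠ 0 := fun hy => hne (Prod.ext (by simp [h]) hy)
    rcases hy.lt_or_gt with hy | hy <;> simp [dir, h, hy]
  · have hx : (P.v (k + 1)).1 - (P.v k).1 ≠ 0 := fun hx => hne (Prod.ext hx (by simp [h]))
    rcases hx.lt_or_gt with hx | hx <;> simp [dir, h, hx]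

lemma dir_fst_eq_one {k : Fin (n + 1)} (h : (P.v k).1 < (P.v (k + 1)).1) : (P.dir k).1 = 1 := by
  simp [dir, sign_pos (sub_pos.2 h)]

lemma dir_fst_eq_neg_one {k : Fin (n + 1)} (h : (P.v (k + 1)).1 < (P.v k).1) :
    (P.dir k).1 = -1 := by
  simp [dir, sign_neg (sub_neg.2 h)]

lemma dir_fst_eq_zero_iff (k : Fin (n + 1)) : (P.dir k).1 = 0 ↔ P.Vert k := by
  rcases lt_trichotomy (P.v k).1 (P.v (k + 1)).1 with h | h | h
  · simp [P.dir_fst_eq_one h, Vert, h.ne]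
  · simp [dir, Vert, h]
  · simp [P.dir_fst_eq_neg_one h, Vert, h.ne']

lemma vert_succ_iff (k : Fin (n + 1)) : P.Vert (k + 1) ↔ ¬ P.Vert k := by
  have h := P.alternate k
  rw [show k + 2 = k + 1 + 1 by grind] at h
  exact iff_not_comm.1 h

lemma dir_succ (k : Fin (n + 1)) : P.dir (k + 1) = P.turn k • rot90 (P.dir k) := by
  have h := P.vert_succ_iff k
  rw [← dir_fst_eq_zero_iff, ← dir_fst_eq_zero_iff] at h
  rw [turn]
  rcases P.dir_cases k with e | e | e | e <;> rcases P.dir_cases (k + 1) with e' | e' | e' | e' <;>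
    simp [e, e', rot90] at h ⊢

lemma turn_sq (k : Fin (n + 1)) : P.turn k ^ 2 = 1 := by
  have h := P.vert_succ_iff k
  rw [← dir_fst_eq_zero_iff, ← dir_fst_eq_zero_iff] at h
  rw [turn]
  rcases P.dir_cases k with e | e | e | e <;> rcases P.dir_cases (k + 1) with e' | e' | e' | e' <;>
    simp [e, e'] at h ⊢

lemma dir_pred (k : Fin (n + 1)) : P.dir (k - 1) = -P.turn (k - 1) • rot90 (P.dir k) := by
  have h := P.dir_succ (k - 1)
  rw [sub_add_cancel] at h
  rw [h, rot90_smul, rot90_rot90, smul_smul, neg_mul, ← sq, turn_sq, neg_smul, one_smul, neg_neg]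

lemma dir_norm_sq (k : Fin (n + 1)) : (P.dir k).1 ^ 2 + (P.dir k).2 ^ 2 = 1 := by
  rcases P.dir_cases k with e | e | e | e <;> simp [e]

lemma smul_dir_add_smul_rot90_inj (k : Fin (n + 1)) {p : ℝ × ℝ} {a b a' b' : ℝ}
    (h : p + a • P.dir k + b • rot90 (P.dir k) = p + a' • P.dir k + b' • rot90 (P.dir k)) :
    a = a' ∧ b = b' := by
  have h1 := congrArg Prod.fst h
  have h2 := congrArg Prod.snd h
  simp only [Prod.fst_add, Prod.snd_add, Prod.smul_fst, Prod.smul_snd, smul_eq_mul, rot90] at h1 h2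
  have hn := P.dir_norm_sq k
  constructor
  · linear_combination (P.dir k).1 * h1 + (P.dir k).2 * h2 - (a - a') * hn
  · linear_combination (P.dir k).1 * h2 - (P.dir k).2 * h1 - (b - b') * hn

lemma norm_smul_dir_add_smul_rot90_le (k : Fin (n + 1)) (a b : ℝ) :
    ‖a • P.dir k + b • rot90 (P.dir k)‖ ≤ |a| + |b| := by
  rcases P.dir_cases k with e | e | e | e <;> simp [e, rot90, Prod.norm_def]

lemma mem_edge_iff {k : Fin (n + 1)} {z : ℝ × ℝ} :
    z ∈ P.edge k ↔ ∃ r ∈ Icc 0 (P.edgeLen k), z = P.v k + r • P.dir k := by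
  have hL := P.edgeLen_pos k
  rw [edge, segment_eq_image', P.v_succ k, add_sub_cancel_left]
  constructor
  · rintro ⟨θ, hθ, rfl⟩
    exact ⟨θ * P.edgeLen k, ⟨by nlinarith [hθ.1], by nlinarith [hθ.2]⟩, by simp only [smul_smul]⟩
  · rintro ⟨r, hr, rfl⟩
    refine ⟨r / P.edgeLen k, ⟨by have := hr.1; positivity, (div_le_one hL).2 hr.2⟩, ?_⟩
    simp only [smul_smul, div_mul_cancel₀ _ hL.ne']

lemma isCompact_edge (k : Fin (n + 1)) : IsCompact (P.edge k) := by
  rw [edge, segment_eq_image']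
  exact isCompact_Icc.image (by fun_prop)

lemma exists_pos_le_dist_of_disjoint_edge {k j : Fin (n + 1)}
    (h : Disjoint (P.edge k) (P.edge j)) :
    ∃ r > 0, ∀ p ∈ P.edge k, ∀ q ∈ P.edge j, r ≤ dist p q := by
  obtain ⟨r, hr, hlt⟩ := Metric.exists_pos_forall_lt_edist (P.isCompact_edge k)
    (P.isCompact_edge j).isClosed h
  exact ⟨r, hr, fun p hp q hq => (ENNReal.coe_lt_ofReal.1 (edist_dist p q ▸ hlt p hp q hq)).le⟩

structure IsCollarWidth (δ : ℝ) : Prop where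
  pos : 0 < δ
  lt_edgeLen : ∀ k, δ < P.edgeLen k
  two_mul_le_dist : ∀ k j, j ≠ k → j ≠ k + 1 → j + 1 ≠ k →
    ∀ p ∈ P.edge k, ∀ q ∈ P.edge j, 2 * δ ≤ dist p q

lemma exists_isCollarWidth : ∃ δ, P.IsCollarWidth δ := by
  have h : ∀ᶠ δ in 𝓝 (0 : ℝ), ∀ k j, δ < P.edgeLen k ∧ (j ≠ k → j ≠ k + 1 → j + 1 ≠ k →
      ∀ p ∈ P.edge k, ∀ q ∈ P.edge j, 2 * δ ≤ dist p q) := by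
    simp only [Filter.eventually_all]
    intro k j
    refine (eventually_lt_nhds (P.edgeLen_pos k)).and ?_
    by_cases hkj : j ≠ k ∧ j ≠ k + 1 ∧ j + 1 ≠ k
    · obtain ⟨r, hr, hsep⟩ :=
        P.exists_pos_le_dist_of_disjoint_edge (P.simple k j hkj.1 hkj.2.1 hkj.2.2)
      filter_upwards [eventually_lt_nhds (half_pos hr)] with δ hδ _ _ _ p hp q hq
      linarith [hsep p hp q hq]
    · filter_upwards with δ h1 h2 h3
      exact absurd ⟨h1, h2, h3⟩ hkj
  obtain ⟨δ, hδ, hpos⟩ :=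
    ((h.filter_mono nhdsWithin_le_nhds).and (self_mem_nhdsWithin (s := Ioi 0))).exists
  exact ⟨δ, hpos, fun k => (hδ k k).1, fun k j => (hδ k j).2⟩

/-- Side `σ = 1` of an edge is the left of its direction of traversal, side `σ = -1` the right.
Where the boundary turns away from side `σ`, the strips on that side of the two edges meeting at
the vertex would not overlap, so both are prolonged by `δ` past it. -/
def cornerExt (σ δ : ℝ) (k : Fin (n + 1)) : ℝ := if P.turn (k - 1) = -σ then δ else 0

def sideStrip (σ δ : ℝ) (k : Fin (n + 1)) : Set (ℝ × ℝ) :=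
  (fun p : ℝ × ℝ => P.v k + p.1 • P.dir k + (σ * p.2) • rot90 (P.dir k)) ''
    Ioo (-P.cornerExt σ δ k) (P.edgeLen k + P.cornerExt σ δ (k + 1)) ×ˢ Ioo 0 δ

def sideCollar (σ δ : ℝ) : Set (ℝ × ℝ) := ⋃ k, P.sideStrip σ δ k

/-- The component of `P.boundaryᶜ` containing `P.sideCollar σ δ`, named through a point of its
first strip. -/
def sideComponent (σ δ : ℝ) : Set (ℝ × ℝ) :=
  connectedComponentIn P.boundaryᶜ
    (P.v 0 + (P.edgeLen 0 / 2) • P.dir 0 + (σ * (δ / 2)) • rot90 (P.dir 0))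

variable {σ δ : ℝ}

lemma cornerExt_nonneg (hδ : 0 ≤ δ) (k : Fin (n + 1)) : 0 ≤ P.cornerExt σ δ k := by
  unfold cornerExt; split_ifs <;> simp [hδ]

lemma cornerExt_le (hδ : 0 ≤ δ) (k : Fin (n + 1)) : P.cornerExt σ δ k ≤ δ := by
  unfold cornerExt; split_ifs <;> simp [hδ]

lemma cornerExt_succ (k : Fin (n + 1)) :
    P.cornerExt σ δ (k + 1) = if P.turn k = -σ then δ else 0 := by
  rw [cornerExt, add_sub_cancel_right]

lemma disjoint_sideStrip_edge (k : Fin (n + 1)) (hσ : σ ^ 2 = 1) :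
    Disjoint (P.sideStrip σ δ k) (P.edge k) := by
  rw [disjoint_left]
  rintro _ ⟨⟨s, u⟩, ⟨-, hu⟩, rfl⟩ hz
  obtain ⟨r, -, hr⟩ := P.mem_edge_iff.1 hz
  rw [← add_zero (P.v k + r • P.dir k), ← zero_smul ℝ (rot90 (P.dir k))] at hr
  have hσ0 : σ ≠ 0 := by rintro rfl; norm_num at hσ
  exact mul_ne_zero hσ0 hu.1.ne' (P.smul_dir_add_smul_rot90_inj k hr).2

lemma disjoint_sideStrip_edge_succ (k : Fin (n + 1)) (hσ : σ ^ 2 = 1) :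
    Disjoint (P.sideStrip σ δ k) (P.edge (k + 1)) := by
  rw [disjoint_left]
  rintro _ ⟨⟨s, u⟩, ⟨hs, hu⟩, rfl⟩ hz
  obtain ⟨r, hr, hz⟩ := P.mem_edge_iff.1 hz
  rw [P.v_succ, P.dir_succ, smul_smul] at hz
  obtain ⟨hsL, hu'⟩ := P.smul_dir_add_smul_rot90_inj k hz
  simp only [mem_Ioo, cornerExt_succ] at hs hu
  split_ifs at hs with hturn
  · have : u + r = 0 := by
      linear_combination σ * hu' + σ * r * hturn - (u + r) * hσ
    linarith [hr.1, hu.1]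
  · linarith [hs.2]

lemma disjoint_sideStrip_edge_pred (k : Fin (n + 1)) (hσ : σ ^ 2 = 1) :
    Disjoint (P.sideStrip σ δ k) (P.edge (k - 1)) := by
  rw [disjoint_left]
  rintro _ ⟨⟨s, u⟩, ⟨hs, hu⟩, rfl⟩ hz
  obtain ⟨r, hr, hz⟩ := P.mem_edge_iff.1 hz
  have hv : P.v (k - 1) = P.v k - P.edgeLen (k - 1) • P.dir (k - 1) := by
    rw [eq_sub_iff_add_eq, ← P.v_succ, sub_add_cancel]
  have hz' : P.v (k - 1) + r • P.dir (k - 1) = P.v k + (0 : ℝ) • P.dir k +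
      ((r - P.edgeLen (k - 1)) * -P.turn (k - 1)) • rot90 (P.dir k) := by
    rw [hv, P.dir_pred]; module
  rw [hz'] at hz
  obtain ⟨hs0, hu'⟩ := P.smul_dir_add_smul_rot90_inj k hz
  have hs1 := hs.1
  simp only [mem_Ioo, cornerExt] at hs1 hu
  split_ifs at hs1 with hturn
  · have : u + P.edgeLen (k - 1) - r = 0 := by
      linear_combination σ * hu' + σ * (P.edgeLen (k - 1) - r) * hturn
        - (u + P.edgeLen (k - 1) - r) * hσ
    linarith [hr.2, hu.1]
  · simp only [neg_zero] at hs1 hs0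
    linarith

lemma sideStrip_subset_compl (hδ : P.IsCollarWidth δ) (hσ : σ ^ 2 = 1) (k : Fin (n + 1)) :
    P.sideStrip σ δ k ⊆ P.boundaryᶜ := by
  intro z hz hzb
  obtain ⟨j, hj⟩ := mem_iUnion.1 hzb
  by_cases e1 : j = k
  · subst e1; exact disjoint_left.1 (P.disjoint_sideStrip_edge j hσ) hz hj
  by_cases e2 : j = k + 1
  · subst e2; exact disjoint_left.1 (P.disjoint_sideStrip_edge_succ k hσ) hz hj
  by_cases e3 : j + 1 = k
  · obtain rfl := eq_sub_of_add_eq e3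
    exact disjoint_left.1 (P.disjoint_sideStrip_edge_pred k hσ) hz hj
  obtain ⟨⟨s, u⟩, ⟨hs, hu⟩, rfl⟩ := hz
  simp only [mem_Ioo] at hs hu
  have hL := P.edgeLen_pos k
  have hek := P.cornerExt_le (σ := σ) hδ.pos.le k
  have hek' := P.cornerExt_le (σ := σ) hδ.pos.le (k + 1)
  -- the point of edge `k` nearest to the strip point is within `2 δ` of it
  set c := max 0 (min s (P.edgeLen k))
  have hw : P.v k + c • P.dir k ∈ P.edge k :=
    P.mem_edge_iff.2 ⟨c, ⟨le_max_left _ _, max_le hL.le (min_le_right _ _)⟩, rfl⟩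
  have hcs : |c - s| < δ := by
    simp only [c, max_def, min_def]
    split_ifs <;> rw [abs_lt] <;> constructor <;> linarith [hδ.pos]
  have hdist : dist (P.v k + c • P.dir k) (P.v k + s • P.dir k + (σ * u) • rot90 (P.dir k))
      < 2 * δ := by
    rw [dist_eq_norm, show P.v k + c • P.dir k - (P.v k + s • P.dir k + (σ * u) • rot90 (P.dir k))
      = (c - s) • P.dir k + (-(σ * u)) • rot90 (P.dir k) by module]
    calc _ ≤ |c - s| + |-(σ * u)| := P.norm_smul_dir_add_smul_rot90_le k _ _
      _ = |c - s| + u := by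
        rw [abs_neg, abs_mul, abs_eq_one_of_sq_eq_one hσ, one_mul, abs_of_pos hu.1]
      _ < 2 * δ := by linarith
  linarith [hδ.two_mul_le_dist k j e1 e2 e3 _ hw _ hj]

lemma sideStrip_inter_succ_nonempty (hδ : P.IsCollarWidth δ) (hσ : σ ^ 2 = 1) (k : Fin (n + 1)) :
    (P.sideStrip σ δ k ∩ P.sideStrip σ δ (k + 1)).Nonempty := by
  have hτ := P.turn_sq k
  have hd := hδ.pos
  have hL := hδ.lt_edgeLen k
  have hL' := hδ.lt_edgeLen (k + 1)
  have he := P.cornerExt_nonneg (σ := σ) hd.le k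
  have he' := P.cornerExt_nonneg (σ := σ) hd.le (k + 1 + 1)
  -- the same point in the coordinates of edge `k + 1` and of edge `k`
  have hpt : P.v (k + 1) + (σ * P.turn k * (δ / 2)) • P.dir (k + 1) +
        (σ * (δ / 2)) • rot90 (P.dir (k + 1)) =
      P.v k + (P.edgeLen k - σ * P.turn k * (δ / 2)) • P.dir k +
        (σ * (δ / 2)) • rot90 (P.dir k) := by
    rw [P.v_succ, P.dir_succ, rot90_smul, rot90_rot90]
    match_scalars
    · rfl
    · ring
    · linear_combination σ * (δ / 2) * hτ
  rcases sq_eq_sq_iff_eq_or_eq_neg.1 (hτ.trans hσ.symm) with h | h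
  · have hρ : σ * P.turn k = 1 := by rw [h, ← sq, hσ]
    have he1 := P.cornerExt_nonneg (σ := σ) hd.le (k + 1)
    rw [hρ, one_mul] at hpt
    refine ⟨_, ⟨(P.edgeLen k - δ / 2, δ / 2), ⟨⟨?_, ?_⟩, ?_, ?_⟩, rfl⟩,
      ⟨(δ / 2, δ / 2), ⟨⟨?_, ?_⟩, ?_, ?_⟩, hpt⟩⟩ <;> linarith
  · have hρ : σ * P.turn k = -1 := by rw [h, mul_neg, ← sq, hσ]
    have he1 : P.cornerExt σ δ (k + 1) = δ := by rw [cornerExt_succ, if_pos h]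
    rw [hρ, neg_one_mul, sub_neg_eq_add] at hpt
    refine ⟨_, ⟨(P.edgeLen k + δ / 2, δ / 2), ⟨⟨?_, ?_⟩, ?_, ?_⟩, rfl⟩,
      ⟨(-(δ / 2), δ / 2), ⟨⟨?_, ?_⟩, ?_, ?_⟩, hpt⟩⟩ <;> linarith

lemma sideCollar_subset_compl (hδ : P.IsCollarWidth δ) (hσ : σ ^ 2 = 1) :
    P.sideCollar σ δ ⊆ P.boundaryᶜ :=
  iUnion_subset fun k => P.sideStrip_subset_compl hδ hσ k

lemma isPreconnected_sideCollar (hδ : P.IsCollarWidth δ) (hσ : σ ^ 2 = 1) :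
    IsPreconnected (P.sideCollar σ δ) :=
  IsPreconnected.iUnion_of_reflTransGen
    (fun _ => (isPreconnected_Ioo.prod isPreconnected_Ioo).image _
      (Continuous.continuousOn (by fun_prop)))
    (Fin.reflTransGen_of_forall_succ fun k => P.sideStrip_inter_succ_nonempty hδ hσ k)

lemma connectedComponentIn_eq_sideComponent (hδ : P.IsCollarWidth δ) (hσ : σ ^ 2 = 1)
    {z : ℝ × ℝ} (hz : z ∈ P.sideCollar σ δ) :
    connectedComponentIn P.boundaryᶜ z = P.sideComponent σ δ := by
  have hL := P.edgeLen_pos 0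
  have he := P.cornerExt_nonneg (σ := σ) hδ.pos.le 0
  have he' := P.cornerExt_nonneg (σ := σ) hδ.pos.le (0 + 1)
  have hbase : P.v 0 + (P.edgeLen 0 / 2) • P.dir 0 + (σ * (δ / 2)) • rot90 (P.dir 0)
      ∈ P.sideCollar σ δ :=
    mem_iUnion.2 ⟨0, (P.edgeLen 0 / 2, δ / 2),
      ⟨⟨by linarith, by linarith⟩, ⟨by linarith [hδ.pos], by linarith [hδ.pos]⟩⟩, rfl⟩
  exact connectedComponentIn_eq ((P.isPreconnected_sideCollar hδ hσ).subset_connectedComponentIn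
    hz (P.sideCollar_subset_compl hδ hσ) hbase)

open Classical in
def crossing (x : ℝ) : Finset (Fin (n + 1)) :=
  Finset.univ.filter fun k => x ∈ uIoo (P.v k).1 (P.v (k + 1)).1

def GenericAbscissa (x : ℝ) : Prop := ∀ k, (P.v k).1 ≠ x

variable {x : ℝ} {k : Fin (n + 1)}

lemma mem_crossing : k ∈ P.crossing x ↔ x ∈ uIoo (P.v k).1 (P.v (k + 1)).1 := by
  simp [crossing]

lemma not_vert_of_mem_crossing (hk : k ∈ P.crossing x) : ¬ P.Vert k := by
  intro h
  rw [P.mem_crossing, show (P.v k).1 = (P.v (k + 1)).1 from h, uIoo_self] at hk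
  exact hk

lemma dir_snd_of_mem_crossing (hk : k ∈ P.crossing x) : (P.dir k).2 = 0 := by
  simp [dir, (P.axis k).resolve_left (P.not_vert_of_mem_crossing hk)]

lemma dir_fst_sq_of_mem_crossing (hk : k ∈ P.crossing x) : (P.dir k).1 ^ 2 = 1 := by
  rcases Ne.lt_or_gt (P.not_vert_of_mem_crossing hk) with h | h
  · rw [P.dir_fst_eq_one h, one_pow]
  · rw [P.dir_fst_eq_neg_one h, neg_one_sq]

lemma dir_fst_mul_sub_mem_Ioo (hk : k ∈ P.crossing x) :
    (P.dir k).1 * (x - (P.v k).1) ∈ Ioo 0 (P.edgeLen k) := by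
  have hne := P.not_vert_of_mem_crossing hk
  have hL : P.edgeLen k = |(P.v (k + 1)).1 - (P.v k).1| := by
    simp [edgeLen, (P.axis k).resolve_left hne]
  rw [P.mem_crossing] at hk
  rcases Ne.lt_or_gt hne with h | h
  · rw [uIoo_of_lt h] at hk
    rw [P.dir_fst_eq_one h, hL, abs_of_pos (sub_pos.2 h)]
    constructor <;> linarith [hk.1, hk.2]
  · rw [uIoo_of_gt h] at hk
    rw [P.dir_fst_eq_neg_one h, hL, abs_of_neg (sub_neg.2 h)]
    constructor <;> linarith [hk.1, hk.2]

lemma mk_add_mem_sideStrip (hk : k ∈ P.crossing x) {ε s δ : ℝ} (hs : 0 < s) (hsδ : s < δ) :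
    (x, (P.v k).2 + ε * s) ∈ P.sideStrip (ε * (P.dir k).1) δ k := by
  have hd1 := P.dir_fst_sq_of_mem_crossing hk
  have hd2 := P.dir_snd_of_mem_crossing hk
  obtain ⟨h0, hL⟩ := P.dir_fst_mul_sub_mem_Ioo hk
  refine ⟨((P.dir k).1 * (x - (P.v k).1), s),
    ⟨⟨by linarith [P.cornerExt_nonneg (σ := ε * (P.dir k).1) (hs.trans hsδ).le k],
      by linarith [P.cornerExt_nonneg (σ := ε * (P.dir k).1) (hs.trans hsδ).le (k + 1)]⟩, hs, hsδ⟩,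
    Prod.ext ?_ ?_⟩ <;>
  simp only [Prod.fst_add, Prod.snd_add, Prod.smul_fst, Prod.smul_snd, smul_eq_mul, rot90, hd2,
    neg_zero, mul_zero, add_zero]
  · linear_combination (x - (P.v k).1) * hd1
  · linear_combination ε * s * hd1

lemma mk_mem_edge_of_mem_crossing (hk : k ∈ P.crossing x) : (x, (P.v k).2) ∈ P.edge k := by
  have hd1 := P.dir_fst_sq_of_mem_crossing hk
  have hd2 := P.dir_snd_of_mem_crossing hk
  obtain ⟨h0, hL⟩ := P.dir_fst_mul_sub_mem_Ioo hk
  refine P.mem_edge_iff.2 ⟨(P.dir k).1 * (x - (P.v k).1), ⟨h0.le, hL.le⟩, Prod.ext ?_ ?_⟩ <;>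
  simp only [Prod.fst_add, Prod.snd_add, Prod.smul_fst, Prod.smul_snd, smul_eq_mul, hd2, mul_zero,
    add_zero]
  linear_combination -(x - (P.v k).1) * hd1

lemma injOn_crossing : Set.InjOn (fun k => (P.v k).2) (P.crossing x) := by
  intro k hk k' hk' h
  by_contra hne
  have hv := P.not_vert_of_mem_crossing hk
  have hv' := P.not_vert_of_mem_crossing hk'
  have e2 : k' ≠ k + 1 := by rintro rfl; exact hv' ((P.vert_succ_iff k).2 hv)
  have e3 : k' + 1 ≠ k := by rintro rfl; exact hv ((P.vert_succ_iff k').2 hv')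
  have hxy := P.mk_mem_edge_of_mem_crossing hk'
  rw [← show (P.v k).2 = (P.v k').2 from h] at hxy
  exact disjoint_left.1 (P.simple k k' (Ne.symm hne) e2 e3) (P.mk_mem_edge_of_mem_crossing hk) hxy

lemma exists_mem_crossing_of_mem_boundary (hx : P.GenericAbscissa x) {y : ℝ}
    (h : (x, y) ∈ P.boundary) : ∃ k ∈ P.crossing x, (P.v k).2 = y := by
  obtain ⟨k, hk⟩ := mem_iUnion.1 h
  obtain ⟨r, ⟨hr0, hrL⟩, hxy⟩ := P.mem_edge_iff.1 hk
  have hsucc := P.v_succ k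
  have h0 := hx k
  have h1 := hx (k + 1)
  rcases P.dir_cases k with e | e | e | e <;> rw [e] at hxy hsucc <;>
    simp only [Prod.ext_iff, Prod.fst_add, Prod.snd_add, Prod.smul_mk, smul_eq_mul, mul_one,
      mul_neg, mul_zero, add_zero] at hxy hsucc
  · refine ⟨k, P.mem_crossing.2 (mem_uIoo_of_lt ?_ ?_), hxy.2.symm⟩
    · exact lt_of_le_of_ne (by linarith) h0
    · exact lt_of_le_of_ne (by linarith) h1.symm
  · refine ⟨k, P.mem_crossing.2 (mem_uIoo_of_gt ?_ ?_), hxy.2.symm⟩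
    · exact lt_of_le_of_ne (by linarith) h1
    · exact lt_of_le_of_ne (by linarith) h0.symm
  all_goals exact absurd hxy.1.symm h0

lemma mk_image_subset_compl (hx : P.GenericAbscissa x) {I : Set ℝ}
    (hI : ∀ k ∈ P.crossing x, (P.v k).2 ∉ I) : (fun y => (x, y)) '' I ⊆ P.boundaryᶜ := by
  rintro _ ⟨y, hy, rfl⟩ hb
  obtain ⟨k, hk, rfl⟩ := P.exists_mem_crossing_of_mem_boundary hx hb
  exact hI k hk hy

lemma connectedComponentIn_mk_eq (hx : P.GenericAbscissa x) {I : Set ℝ} (hI : IsPreconnected I)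
    (hIK : ∀ k ∈ P.crossing x, (P.v k).2 ∉ I) {y y' : ℝ} (hy : y ∈ I) (hy' : y' ∈ I) :
    connectedComponentIn P.boundaryᶜ (x, y) = connectedComponentIn P.boundaryᶜ (x, y') :=
  connectedComponentIn_eq <|
    (hI.image _ (Continuous.continuousOn (by fun_prop))).subset_connectedComponentIn
      (mem_image_of_mem _ hy) (P.mk_image_subset_compl hx hIK) (mem_image_of_mem _ hy')

lemma not_isBounded_connectedComponentIn_mk (hx : P.GenericAbscissa x) {I : Set ℝ}
    (hI : IsPreconnected I) (hIu : ¬ Bornology.IsBounded I)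
    (hIK : ∀ k ∈ P.crossing x, (P.v k).2 ∉ I) {y : ℝ} (hy : y ∈ I) :
    ¬ Bornology.IsBounded (connectedComponentIn P.boundaryᶜ (x, y)) := by
  intro hb
  have hsub := (hI.image _ (Continuous.continuousOn (by fun_prop))).subset_connectedComponentIn
    (mem_image_of_mem (fun y => (x, y)) hy) (P.mk_image_subset_compl hx hIK)
  apply hIu
  simpa [image_image] using LipschitzWith.prod_snd.isBounded_image (hb.subset hsub)

lemma not_isBounded_sideComponent_of_top (hδ : P.IsCollarWidth δ) (hx : P.GenericAbscissa x)
    (hk : k ∈ P.crossing x) (htop : ∀ j ∈ P.crossing x, (P.v j).2 ≤ (P.v k).2) :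
    ¬ Bornology.IsBounded (P.sideComponent (P.dir k).1 δ) := by
  have hz := P.mk_add_mem_sideStrip hk (ε := 1) (half_pos hδ.pos) (half_lt_self hδ.pos)
  rw [one_mul, one_mul] at hz
  rw [← P.connectedComponentIn_eq_sideComponent hδ (P.dir_fst_sq_of_mem_crossing hk)
    (mem_iUnion.2 ⟨k, hz⟩)]
  refine P.not_isBounded_connectedComponentIn_mk hx isPreconnected_Ici
    (fun h => not_bddAbove_Ici _ h.bddAbove) (fun j hj hmem => ?_) self_mem_Ici
  linarith [htop j hj, mem_Ici.1 hmem, hδ.pos]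

lemma not_isBounded_sideComponent_of_bottom (hδ : P.IsCollarWidth δ) (hx : P.GenericAbscissa x)
    (hk : k ∈ P.crossing x) (hbot : ∀ j ∈ P.crossing x, (P.v k).2 ≤ (P.v j).2) :
    ¬ Bornology.IsBounded (P.sideComponent (-(P.dir k).1) δ) := by
  have hz := P.mk_add_mem_sideStrip hk (ε := -1) (half_pos hδ.pos) (half_lt_self hδ.pos)
  rw [neg_one_mul, neg_one_mul] at hz
  rw [← P.connectedComponentIn_eq_sideComponent hδ
    (by rw [neg_sq]; exact P.dir_fst_sq_of_mem_crossing hk) (mem_iUnion.2 ⟨k, hz⟩)]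
  refine P.not_isBounded_connectedComponentIn_mk hx isPreconnected_Iic
    (fun h => not_bddBelow_Iic _ h.bddBelow) (fun j hj hmem => ?_) self_mem_Iic
  linarith [hbot j hj, mem_Iic.1 hmem, hδ.pos]

lemma sideComponent_eq_of_adjacent (hδ : P.IsCollarWidth δ) (hx : P.GenericAbscissa x)
    {k k' : Fin (n + 1)} (hk : k ∈ P.crossing x) (hk' : k' ∈ P.crossing x)
    (hlt : (P.v k).2 < (P.v k').2)
    (hadj : ∀ j ∈ P.crossing x, (P.v j).2 ∉ Ioo (P.v k).2 (P.v k').2) :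
    P.sideComponent (P.dir k).1 δ = P.sideComponent (-(P.dir k').1) δ := by
  obtain ⟨s, hs, hsm⟩ := exists_between (lt_min hδ.pos (sub_pos.2 hlt))
  obtain ⟨hsδ, hsgap⟩ := lt_min_iff.1 hsm
  have hz := P.mk_add_mem_sideStrip hk (ε := 1) hs hsδ
  have hz' := P.mk_add_mem_sideStrip hk' (ε := -1) hs hsδ
  rw [one_mul, one_mul] at hz
  rw [neg_one_mul, neg_one_mul] at hz'
  rw [← P.connectedComponentIn_eq_sideComponent hδ (P.dir_fst_sq_of_mem_crossing hk)
      (mem_iUnion.2 ⟨k, hz⟩),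
    ← P.connectedComponentIn_eq_sideComponent hδ
      (by rw [neg_sq]; exact P.dir_fst_sq_of_mem_crossing hk') (mem_iUnion.2 ⟨k', hz'⟩)]
  exact P.connectedComponentIn_mk_eq hx isPreconnected_Ioo hadj ⟨by linarith, by linarith⟩
    ⟨by linarith, by linarith⟩

def crossingSum (x : ℝ) : ℝ := ∑ k ∈ P.crossing x, (P.dir k).1 * (P.v k).2

lemma crossingSum_eq_sum_indicator (x : ℝ) : P.crossingSum x =
    ∑ k, (uIoo (P.v k).1 (P.v (k + 1)).1).indicator (fun _ => (P.dir k).1 * (P.v k).2) x := by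
  rw [crossingSum, crossing, Finset.sum_filter]
  exact Finset.sum_congr rfl fun k _ => by classical rw [indicator_apply]

lemma integral_crossingSum :
    ∫ x, P.crossingSum x = ∑ k, ((P.v (k + 1)).1 - (P.v k).1) * (P.v k).2 := by
  simp_rw [crossingSum_eq_sum_indicator, ← Ioo_min_max]
  rw [integral_finsetSum _ fun k _ => (integrable_indicator_iff measurableSet_Ioo).2
    (integrableOn_const measure_Ioo_lt_top.ne)]
  refine Finset.sum_congr rfl fun k _ => ?_
  rw [integral_indicator_const _ measurableSet_Ioo, Real.volume_real_Ioo, max_sub_min_eq_abs',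
    max_eq_left (abs_nonneg _), abs_sub_comm, smul_eq_mul, ← mul_assoc]
  exact congrArg (· * (P.v k).2) (abs_mul_sign _)

lemma sum_sub_mul_pos : 0 < ∑ k, ((P.v (k + 1)).1 - (P.v k).1) * (P.v k).2 := by
  have hcw := P.clockwise
  have hterm : ∀ k : Fin (n + 1), (P.v k).1 * (P.v (k + 1)).2 - (P.v (k + 1)).1 * (P.v k).2 =
      -2 * (((P.v (k + 1)).1 - (P.v k).1) * (P.v k).2) +
        ((P.v (k + 1)).1 * (P.v (k + 1)).2 - (P.v k).1 * (P.v k).2) := by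
    intro k
    rcases P.axis k with h | h <;> rw [← h] <;> ring
  have htel :
      ∑ k : Fin (n + 1), ((P.v (k + 1)).1 * (P.v (k + 1)).2 - (P.v k).1 * (P.v k).2) = 0 := by
    rw [Finset.sum_sub_distrib, sub_eq_zero]
    exact Equiv.sum_comp (Equiv.addRight (1 : Fin (n + 1))) fun k => (P.v k).1 * (P.v k).2
  simp_rw [hterm, Finset.sum_add_distrib, htel, ← Finset.mul_sum] at hcw
  linarith

lemma exists_crossingSum_pos : ∃ x, P.GenericAbscissa x ∧ 0 < P.crossingSum x := by
  by_contra! h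
  have hfin : {x | ¬ P.GenericAbscissa x}.Finite :=
    (finite_range fun k => (P.v k).1).subset fun x hx => by simpa [GenericAbscissa] using hx
  have hae : ∀ᵐ x, P.crossingSum x ≤ 0 := by
    filter_upwards [measure_eq_zero_iff_ae_notMem.1 (hfin.measure_zero volume)] with x hx
    exact h x (by simpa using hx)
  have := integral_nonpos_of_ae hae
  rw [integral_crossingSum] at this
  linarith [P.sum_sub_mul_pos]

lemma not_isBounded_sideComponent_one (hδ : P.IsCollarWidth δ) :
    ¬ Bornology.IsBounded (P.sideComponent 1 δ) := by
  classical
  intro hb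
  obtain ⟨x, hx, hpos⟩ := P.exists_crossingSum_pos
  have hne : (P.crossing x).Nonempty := by
    by_contra h
    simp [crossingSum, Finset.not_nonempty_iff_eq_empty.1 h] at hpos
  have hsign : ∀ k ∈ P.crossing x, (P.dir k).1 = 1 ∨ (P.dir k).1 = -1 := fun k hk =>
    sq_eq_one_iff.1 (P.dir_fst_sq_of_mem_crossing hk)
  have htop : ∀ k ∈ P.crossing x, (∀ j ∈ P.crossing x, (P.v j).2 ≤ (P.v k).2) →
      (P.dir k).1 = -1 := fun k hk htop => (hsign k hk).resolve_left fun h =>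
    P.not_isBounded_sideComponent_of_top hδ hx hk htop (h ▸ hb)
  have hdiff : P.sideComponent 1 δ ≠ P.sideComponent (-1) δ := by
    obtain ⟨k, hk, hmax⟩ := (P.crossing x).exists_max_image (fun k => (P.v k).2) hne
    intro h
    exact P.not_isBounded_sideComponent_of_top hδ hx hk hmax (by rw [htop k hk hmax, ← h]; exact hb)
  refine hpos.not_ge (Finset.sum_mul_nonpos_of_alternating _ _ _ P.injOn_crossing
    (fun k hk hbot => (hsign k hk).resolve_right fun h => ?_) htop
    (fun k hk k' hk' hlt hadj => ?_))
  · exact P.not_isBounded_sideComponent_of_bottom hδ hx hk hbot (by rw [h, neg_neg]; exact hb)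
  · have h := P.sideComponent_eq_of_adjacent hδ hx hk hk' hlt hadj
    rcases hsign k hk with h1 | h1 <;> rcases hsign k' hk' with h2 | h2 <;>
      simp only [h1, h2, neg_neg] at h ⊢
    · exact absurd h hdiff
    · exact absurd h.symm hdiff

lemma disjoint_sideCollar_one_region (hδ : P.IsCollarWidth δ) :
    Disjoint (P.sideCollar 1 δ) P.region := by
  rw [disjoint_left]
  rintro z hz (hzb | ⟨-, hbdd⟩)
  · exact P.sideCollar_subset_compl hδ (one_pow 2) hz hzb
  · rw [P.connectedComponentIn_eq_sideComponent hδ (one_pow 2) hz] at hbdd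
    exact P.not_isBounded_sideComponent_one hδ hbdd

lemma eventually_interior_region_dir_mul_neg {p : ℝ × ℝ} (hk : k ∈ P.crossing p.1)
    (hp : p.2 = (P.v k).2) :
    ∀ᶠ q in 𝓝 p, q ∈ interior P.region → (P.dir k).1 * (q.2 - (P.v k).2) < 0 := by
  obtain ⟨δ, hδ⟩ := P.exists_isCollarWidth
  have hd1 := P.dir_fst_sq_of_mem_crossing hk
  have hU : uIoo (P.v k).1 (P.v (k + 1)).1 ×ˢ Ioo ((P.v k).2 - δ) ((P.v k).2 + δ) ∈ 𝓝 p :=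
    (isOpen_Ioo.prod isOpen_Ioo).mem_nhds
      ⟨P.mem_crossing.1 hk, by rw [hp]; constructor <;> linarith [hδ.pos]⟩
  filter_upwards [hU] with q ⟨hq1, hq2⟩ hq
  by_contra! hc
  -- push `q` vertically off the edge, staying in the interior, into the strip on side `1`
  obtain ⟨r, hr, hqr⟩ := Metric.isOpen_iff.1 isOpen_interior q hq
  have hcδ : (P.dir k).1 * (q.2 - (P.v k).2) < δ := by
    rcases sq_eq_one_iff.1 hd1 with h | h <;> rw [h] <;> linarith [hq2.1, hq2.2]
  obtain ⟨s, hs, hsm⟩ := exists_between (lt_min (lt_add_of_pos_right _ hr) hcδ)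
  obtain ⟨hsr, hsδ⟩ := lt_min_iff.1 hsm
  have hz := P.mk_add_mem_sideStrip (P.mem_crossing.2 hq1) (ε := (P.dir k).1) (hc.trans_lt hs) hsδ
  rw [← sq, hd1] at hz
  refine disjoint_left.1 (P.disjoint_sideCollar_one_region hδ) (mem_iUnion.2 ⟨k, hz⟩)
    (interior_subset (hqr ?_))
  rw [Metric.mem_ball, Prod.dist_eq, dist_self, Real.dist_eq, max_eq_right (abs_nonneg _)]
  have : (P.v k).2 + (P.dir k).1 * s - q.2 =
      (P.dir k).1 * (s - (P.dir k).1 * (q.2 - (P.v k).2)) := by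
    linear_combination (q.2 - (P.v k).2) * hd1
  rw [this, abs_mul, abs_eq_one_of_sq_eq_one hd1, one_mul, abs_of_pos (sub_pos.2 hs)]
  linarith

lemma mem_crossing_add_smul {t : ℝ} (h : (P.v k).1 ≠ (P.v (k + 1)).1) (ht : t ∈ Ioo (0 : ℝ) 1) :
    k ∈ P.crossing (P.v k + t • (P.v (k + 1) - P.v k)).1 := by
  obtain ⟨ht0, ht1⟩ := ht
  rw [P.mem_crossing]
  simp only [Prod.fst_add, Prod.smul_fst, Prod.fst_sub, smul_eq_mul]
  rcases h.lt_or_gt with h | h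
  · exact mem_uIoo_of_lt (by nlinarith) (by nlinarith)
  · exact mem_uIoo_of_gt (by nlinarith) (by nlinarith)

end

end RectPolygon

open RectPolygon in
/-- For a horizontal edge of a rectilinear hole: interior points sufficiently close to the
relative interior of a clockwise-leftward edge lie above it, and interior points
sufficiently close to the relative interior of a clockwise-rightward edge lie below it. -/
theorem interior_side_of_horizontal_edge {n : ℕ} (P : RectPolygon n)
    (i : Fin (n + 1)) (t : ℝ) (ht : t ∈ Ioo (0:ℝ) 1) :
    (P.Leftward i → ∃ ε > (0:ℝ), ∀ q ∈ interior P.region,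
        dist q (P.v i + t • (P.v (i + 1) - P.v i)) < ε → (P.v i).2 < q.2) ∧
    (P.Rightward i → ∃ ε > (0:ℝ), ∀ q ∈ interior P.region,
        dist q (P.v i + t • (P.v (i + 1) - P.v i)) < ε → q.2 < (P.v i).2) := by
  have hp : P.Horiz i → (P.v i + t • (P.v (i + 1) - P.v i)).2 = (P.v i).2 := fun h => by
    simp [← show (P.v i).2 = (P.v (i + 1)).2 from h]
  refine ⟨fun ⟨hh, hlt⟩ => ?_, fun ⟨hh, hlt⟩ => ?_⟩
  · obtain ⟨ε, hε, h⟩ := Metric.eventually_nhds_iff.1 <|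
      P.eventually_interior_region_dir_mul_neg (P.mem_crossing_add_smul hlt.ne' ht) (hp hh)
    refine ⟨ε, hε, fun q hq hqp => ?_⟩
    have := h hqp hq
    rw [P.dir_fst_eq_neg_one hlt] at this
    linarith
  · obtain ⟨ε, hε, h⟩ := Metric.eventually_nhds_iff.1 <|
      P.eventually_interior_region_dir_mul_neg (P.mem_crossing_add_smul hlt.ne ht) (hp hh)
    refine ⟨ε, hε, fun q hq hqp => ?_⟩
    have := h hqp hq
    rw [P.dir_fst_eq_one hlt] at this
    linarith
end

section
/- Let H be a BLS-hole, R its unique rightmost edge, L_1,…,L_k its leftmost edges in clockwise order starting after R, and N_2,…,N_k its left notches in clockwise order starting after R. Then a clockwise traversal starting at R visits these edges in the order R, L_1, N_2, L_2, N_3, …, N_k, L_k, R (leftmost edges and left notches strictly alternate). Moreover, if H contains a falling corner, it is traversed between L_k and R. -/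
open Set

/-!
Walk clockwise from `R`: edges alternate between vertical and horizontal, and we record whether
the `m`-th horizontal edge points right. This Boolean sequence starts false (`R` is followed by a
leftward edge) and ends true (`R` is preceded by a rightward edge). As there are no right
notches, its rises are exactly the leftmost edges, and its falls are the left notches together
with the rightmost edges other than `R`. A sequence that starts false and ends true has one more
rise than falls, and its rises and falls alternate; with `k` leftmost edges and `k - 1` left
notches, every fall is therefore a left notch, which gives the alternation and the uniqueness of
`R`. Without top notches and with a single falling corner, a falling corner is followed two edges
later by a rightmost edge, i.e. by `R`, so it comes after every leftmost edge.
-/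

open Function Nat

section RiseFall

def IsRise (s : ℕ → Prop) (t : ℕ) : Prop := ¬ s t ∧ s (t + 1)

def IsFall (s : ℕ → Prop) (t : ℕ) : Prop := s t ∧ ¬ s (t + 1)

instance {s : ℕ → Prop} [DecidablePred s] : DecidablePred (IsRise s) :=
  fun t => inferInstanceAs (Decidable (¬ s t ∧ s (t + 1)))

instance {s : ℕ → Prop} [DecidablePred s] : DecidablePred (IsFall s) :=
  fun t => inferInstanceAs (Decidable (s t ∧ ¬ s (t + 1)))

theorem count_isRise {s : ℕ → Prop} [DecidablePred s] (h0 : ¬ s 0) (t : ℕ) :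
    count (IsRise s) t = count (IsFall s) t + if s t then 1 else 0 := by
  induction t with
  | zero => simp [h0]
  | succ t ih =>
    rw [count_succ, count_succ, ih]
    unfold IsRise IsFall
    by_cases s t <;> by_cases s (t + 1) <;> simp [*]

def Enumerates {q : ℕ} (c : Fin q → ℕ) (S : Set ℕ) : Prop := StrictMono c ∧ range c = S

variable {p : ℕ → Prop} {q T : ℕ} {c : Fin q → ℕ}

theorem Enumerates.mem_iff (hc : Enumerates c {t | t < T ∧ p t}) {t : ℕ} :
    t < T ∧ p t ↔ ∃ j, c j = t := by
  rw [← Set.mem_range, hc.2]; rfl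

theorem Enumerates.lt (hc : Enumerates c {t | t < T ∧ p t}) (j : Fin q) : c j < T :=
  (hc.mem_iff.2 ⟨j, rfl⟩).1

theorem Enumerates.prop (hc : Enumerates c {t | t < T ∧ p t}) (j : Fin q) : p (c j) :=
  (hc.mem_iff.2 ⟨j, rfl⟩).2

theorem Enumerates.count_apply [DecidablePred p] (hc : Enumerates c {t | t < T ∧ p t})
    (j : Fin q) : count p (c j) = j := by
  have : {t ∈ Finset.range (c j) | p t} = (Finset.Iio j).image c := by
    ext t
    simp only [Finset.mem_filter, Finset.mem_range, Finset.mem_image, Finset.mem_Iio]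
    constructor
    · rintro ⟨htj, ht⟩
      obtain ⟨j', rfl⟩ := hc.mem_iff.1 ⟨htj.trans (hc.lt j), ht⟩
      exact ⟨j', hc.1.lt_iff_lt.1 htj, rfl⟩
    · rintro ⟨j', hj', rfl⟩
      exact ⟨hc.1 hj', hc.prop j'⟩
  rw [count_eq_card_filter_range, this, Finset.card_image_of_injective _ hc.1.injective,
    Fin.card_Iio]

theorem Enumerates.count_eq [DecidablePred p] (hc : Enumerates c {t | t < T ∧ p t}) :
    count p T = q := by
  have : {t ∈ Finset.range T | p t} = Finset.univ.image c := by
    ext t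
    simpa [Finset.mem_filter, Finset.mem_range] using hc.mem_iff
  rw [count_eq_card_filter_range, this, Finset.card_image_of_injective _ hc.1.injective,
    Finset.card_univ, Fintype.card_fin]

theorem Enumerates.lt_iff_lt_count [DecidablePred p] (hc : Enumerates c {t | t < T ∧ p t})
    (j : Fin q) (x : ℕ) : c j < x ↔ (j : ℕ) < count p x := by
  constructor
  · intro h
    exact hc.count_apply j ▸ count_strict_mono (hc.prop j) h
  · intro h
    by_contra! hle
    exact (count_monotone p hle).trans_lt (hc.count_apply j ▸ h) |>.false

variable {s : ℕ → Prop} {k : ℕ} {a : Fin k → ℕ} {b : Fin q → ℕ}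

/-- A sequence that starts false and ends true rises once more than it falls, so `k - 1`
falls below `T` are all of them. -/
theorem Enumerates.isFall_iff (h0 : ¬ s 0) (hT : s T)
    (ha : Enumerates a {t | t < T ∧ IsRise s t}) (hb : Enumerates b {t | t < T ∧ p t})
    (hp : ∀ t < T, p t → IsFall s t) (hk : q + 1 = k) : ∀ t < T, (IsFall s t ↔ p t) := by
  classical
  have hcount : count (IsFall s) T = q := by
    have := count_isRise h0 T
    rw [ha.count_eq, if_pos hT] at this
    omega
  have hsub : Finset.univ.image b ⊆ {t ∈ Finset.range T | IsFall s t} := by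
    intro t ht
    obtain ⟨j, -, rfl⟩ := Finset.mem_image.1 ht
    simpa using ⟨hb.lt j, hp _ (hb.lt j) (hb.prop j)⟩
  have heq := Finset.eq_of_subset_of_card_le hsub (by
    rw [← count_eq_card_filter_range, hcount, Finset.card_image_of_injective _ hb.1.injective,
      Finset.card_univ, Fintype.card_fin])
  refine fun t ht => ⟨fun hfall => ?_, hp t ht⟩
  have : t ∈ Finset.univ.image b := heq ▸ (by simpa using ⟨ht, hfall⟩)
  obtain ⟨j, -, rfl⟩ := Finset.mem_image.1 this
  exact hb.prop j

theorem Enumerates.isRise_lt_isFall_iff (h0 : ¬ s 0)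
    (ha : Enumerates a {t | t < T ∧ IsRise s t}) (hb : Enumerates b {t | t < T ∧ IsFall s t})
    (j : Fin k) (i : Fin q) : a j < b i ↔ (j : ℕ) ≤ i := by
  classical
  have hcount : count (IsRise s) (b i) = i + 1 := by
    rw [count_isRise h0, hb.count_apply, if_pos (hb.prop i).1]
  rw [ha.lt_iff_lt_count j, hcount, Nat.lt_succ_iff]

theorem Enumerates.isFall_lt_isRise_iff (h0 : ¬ s 0)
    (hb : Enumerates b {t | t < T ∧ IsFall s t}) (ha : Enumerates a {t | t < T ∧ IsRise s t})
    (i : Fin q) (j : Fin k) : b i < a j ↔ (i : ℕ) < j := by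
  classical
  have hcount : count (IsFall s) (a j) = j := by
    have := count_isRise h0 (a j)
    rw [ha.count_apply, if_neg (ha.prop j).1] at this
    omega
  rw [hb.lt_iff_lt_count i, hcount]

end RiseFall

section cpos

open Fin.NatCast Fin.CommRing

variable {m : ℕ}

theorem cpos_add_natCast (r : Fin (m + 1)) {t : ℕ} (ht : t ≤ m) : cpos r (r + t) = t := by
  rw [cpos, add_sub_cancel_left, Fin.val_cast_of_lt (Nat.lt_succ_of_le ht)]

theorem add_cpos (r i : Fin (m + 1)) : r + (cpos r i : Fin (m + 1)) = i := by
  rw [cpos, Fin.cast_val_eq_self, add_sub_cancel]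

theorem cpos_injective (r : Fin (m + 1)) : Injective (cpos r) :=
  LeftInverse.injective (g := fun t : ℕ => r + (t : Fin (m + 1))) (add_cpos r)

end cpos

namespace RectPolygon

open Fin.NatCast Fin.CommRing

variable {n T q : ℕ}

section

variable (P : RectPolygon n)

theorem horiz_iff_not_vert (i : Fin (n + 1)) : P.Horiz i ↔ ¬ P.Vert i :=
  ⟨fun hh hv => P.nondegen i (Prod.ext hv hh), (P.axis i).resolve_left⟩

theorem vert_add_one_iff (i : Fin (n + 1)) : P.Vert (i + 1) ↔ ¬ P.Vert i := by
  have := P.alternate i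
  rw [show i + 2 = i + 1 + 1 by ring] at this
  exact (not_iff_comm.1 this.symm).symm

theorem add_two_ne (P : RectPolygon n) (i : Fin (n + 1)) : i + 2 ≠ i := by
  intro h
  have hv : P.Vert (i + 1) ↔ P.Vert i := by
    rw [Vert, Vert, show i + 1 + 1 = i by rw [add_assoc, one_add_one_eq_two, h]]
    exact eq_comm
  have := P.vert_add_one_iff i
  tauto

theorem vert_add_natCast_iff {r : Fin (n + 1)} (hr : P.Vert r) (t : ℕ) :
    P.Vert (r + t) ↔ Even t := by
  induction t with
  | zero => simpa using hr
  | succ t ih => rw [Nat.cast_succ, ← add_assoc, vert_add_one_iff, ih, Nat.even_add_one]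

theorem even_succ_of_vert {r : Fin (n + 1)} (hr : P.Vert r) : Even (n + 1) :=
  (P.vert_add_natCast_iff hr (n + 1)).1 (by simpa using hr)

end

variable {P : RectPolygon n} {i r : Fin (n + 1)}

theorem Horiz.rightward_or_leftward (h : P.Horiz i) : P.Rightward i ∨ P.Leftward i := by
  rcases lt_trichotomy (P.v i).1 (P.v (i + 1)).1 with hlt | heq | hgt
  · exact .inl ⟨h, hlt⟩
  · exact absurd (Prod.ext heq h) (P.nondegen i)
  · exact .inr ⟨h, hgt⟩

theorem Vert.upward_or_downward (h : P.Vert i) : P.Upward i ∨ P.Downward i := by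
  rcases lt_trichotomy (P.v i).2 (P.v (i + 1)).2 with hlt | heq | hgt
  · exact .inl ⟨h, hlt⟩
  · exact absurd (Prod.ext h heq) (P.nondegen i)
  · exact .inr ⟨h, hgt⟩

theorem Leftward.not_rightward (h : P.Leftward i) : ¬ P.Rightward i :=
  fun h' => lt_asymm h.2 h'.2

theorem Upward.not_downward (h : P.Upward i) : ¬ P.Downward i :=
  fun h' => lt_asymm h.2 h'.2

theorem vert_sub_one_iff : P.Vert (i - 1) ↔ ¬ P.Vert i := by
  rw [← not_iff_not, not_not, ← P.vert_add_one_iff, sub_add_cancel]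

theorem Vert.horiz_add_one (h : P.Vert i) : P.Horiz (i + 1) :=
  (P.horiz_iff_not_vert _).2 fun hv => (P.vert_add_one_iff i).1 hv h

theorem Vert.horiz_sub_one (h : P.Vert i) : P.Horiz (i - 1) :=
  (P.horiz_iff_not_vert _).2 fun hv => vert_sub_one_iff.1 hv h

theorem Horiz.vert_add_one (h : P.Horiz i) : P.Vert (i + 1) :=
  (P.vert_add_one_iff i).2 ((P.horiz_iff_not_vert i).1 h)

theorem leftmostEdge_or_rightNotch (hi : P.Vert i) (hprev : ¬ P.Rightward (i - 1))
    (hnext : P.Rightward (i + 1)) : P.LeftmostEdge i ∨ P.RightNotch i := by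
  have hl := hi.horiz_sub_one.rightward_or_leftward.resolve_left hprev
  rcases hi.upward_or_downward with hu | hd
  · exact .inl ⟨hu, hl, hnext⟩
  · exact .inr ⟨hd, hl, hnext⟩

theorem leftNotch_or_rightmostEdge (hi : P.Vert i) (hprev : P.Rightward (i - 1))
    (hnext : ¬ P.Rightward (i + 1)) : P.LeftNotch i ∨ P.RightmostEdge i := by
  have hl := hi.horiz_add_one.rightward_or_leftward.resolve_left hnext
  rcases hi.upward_or_downward with hu | hd
  · exact .inl ⟨hu, hprev, hl⟩
  · exact .inr ⟨hd, hprev, hl⟩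

/-- Without top notches, the rightward edge leaving a falling corner is followed by a downward
edge, and as there is only one falling corner, that edge is a rightmost edge. -/
theorem BLS.rightmostEdge_add_two (hP : P.BLS) (h : P.FallingCornerAt i) :
    P.RightmostEdge (i + 2) := by
  obtain ⟨hd, hrw⟩ := h
  have e1 : i + 2 = i + 1 + 1 := by ring
  have e2 : i + 2 - 1 = i + 1 := by ring
  have hv : P.Vert (i + 2) := e1 ▸ hrw.1.vert_add_one
  have hd2 : P.Downward (i + 2) := by
    refine hv.upward_or_downward.resolve_left fun hu => hP.2.1 (i + 1) ⟨hrw, ?_, e1 ▸ hu⟩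
    rwa [add_sub_cancel_right]
  have hl : P.Leftward (i + 2 + 1) := by
    refine hv.horiz_add_one.rightward_or_leftward.resolve_left fun hrw' => ?_
    exact P.add_two_ne i (hP.2.2 _ _ ⟨hd2, hrw'⟩ ⟨hd, hrw⟩)
  exact ⟨hd2, e2 ▸ hrw, hl⟩

variable (P) in
/-- Whether the `m`-th horizontal edge after the vertical edge `r` is rightward. -/
def horizRightward (r : Fin (n + 1)) (m : ℕ) : Prop := P.Rightward (r + ↑(2 * m + 1))

theorem horizRightward_zero : P.horizRightward r 0 ↔ P.Rightward (r + 1) := by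
  simp [horizRightward]

theorem horizRightward_last {T : ℕ} (hn : n = 2 * T + 1) :
    P.horizRightward r T ↔ P.Rightward (r - 1) := by
  rw [horizRightward, ← hn, ← neg_neg (n : Fin (n + 1)), Fin.neg_natCast_eq_one,
    ← sub_eq_add_neg]

private theorem add_even_sub_one (r : Fin (n + 1)) (m : ℕ) :
    r + ↑(2 * m + 2) - 1 = r + ↑(2 * m + 1) := by
  push_cast; ring

private theorem add_even_add_one (r : Fin (n + 1)) (m : ℕ) :
    r + ↑(2 * m + 2) + 1 = r + ↑(2 * (m + 1) + 1) := by
  push_cast; ring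

theorem leftmostEdge_iff_isRise (hP : P.BLS) (hr : P.Vert r) (m : ℕ) :
    P.LeftmostEdge (r + ↑(2 * m + 2)) ↔ IsRise (P.horizRightward r) m := by
  rw [LeftmostEdge, add_even_sub_one, add_even_add_one]
  refine ⟨fun ⟨_, hl, hrw⟩ => ⟨hl.not_rightward, hrw⟩, fun ⟨hprev, hnext⟩ => ?_⟩
  have hv : P.Vert (r + ↑(2 * m + 2)) := (P.vert_add_natCast_iff hr _).2 ⟨m + 1, by ring⟩
  have := leftmostEdge_or_rightNotch hv (by rwa [add_even_sub_one]) (by rwa [add_even_add_one])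
  rw [LeftmostEdge, add_even_sub_one, add_even_add_one] at this
  exact this.resolve_right (hP.1 _)

theorem leftNotch_or_rightmostEdge_iff_isFall (hr : P.Vert r) (m : ℕ) :
    P.LeftNotch (r + ↑(2 * m + 2)) ∨ P.RightmostEdge (r + ↑(2 * m + 2)) ↔
      IsFall (P.horizRightward r) m := by
  rw [LeftNotch, RightmostEdge, add_even_sub_one, add_even_add_one]
  refine ⟨fun h => ?_, fun ⟨hprev, hnext⟩ => ?_⟩
  · rcases h with ⟨_, hrw, hl⟩ | ⟨_, hrw, hl⟩ <;> exact ⟨hrw, hl.not_rightward⟩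
  · have hv : P.Vert (r + ↑(2 * m + 2)) := (P.vert_add_natCast_iff hr _).2 ⟨m + 1, by ring⟩
    have := leftNotch_or_rightmostEdge hv (by rwa [add_even_sub_one]) (by rwa [add_even_add_one])
    rwa [LeftNotch, RightmostEdge, add_even_sub_one, add_even_add_one] at this

theorem exists_cpos_eq_of_vert (hr : P.Vert r) (hn : n = 2 * T + 1) (hi : P.Vert i)
    (hne : i ≠ r) : ∃ m < T, cpos r i = 2 * m + 2 := by
  have hle : cpos r i ≤ n := Nat.lt_succ_iff.1 (i - r).isLt
  have hpos : cpos r i ≠ 0 := fun h => hne (by rw [← add_cpos r i, h, Nat.cast_zero, add_zero])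
  obtain ⟨c, hc⟩ := (P.vert_add_natCast_iff hr _).1 (by rwa [add_cpos])
  exact ⟨c - 1, by omega, by omega⟩

theorem exists_enumerates (hr : P.Vert r) (hn : n = 2 * T + 1) {Q : Fin (n + 1) → Prop}
    {p : ℕ → Prop} (hQ : ∀ i, Q i → P.Vert i ∧ i ≠ r)
    (hQp : ∀ m < T, Q (r + ↑(2 * m + 2)) ↔ p m) {E : Fin q → Fin (n + 1)}
    (hE : ∀ j, Q (E j)) (hEsurj : ∀ i, Q i → ∃ j, E j = i)
    (hmono : StrictMono fun j => cpos r (E j)) :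
    ∃ c : Fin q → ℕ, Enumerates c {m | m < T ∧ p m} ∧
      ∀ j, cpos r (E j) = 2 * c j + 2 := by
  choose c hcT hc using fun j => exists_cpos_eq_of_vert hr hn (hQ _ (hE j)).1 (hQ _ (hE j)).2
  have hEc : ∀ j, E j = r + ↑(2 * c j + 2) := fun j => by rw [← hc, add_cpos]
  refine ⟨c, ⟨fun j j' h => ?_, Set.ext fun m => ⟨?_, fun ⟨hm, hpm⟩ => ?_⟩⟩, hc⟩
  · have : cpos r (E j) < cpos r (E j') := hmono h
    have := hc j
    have := hc j'
    omega
  · rintro ⟨j, rfl⟩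
    exact ⟨hcT j, (hQp _ (hcT j)).1 (hEc j ▸ hE j)⟩
  · obtain ⟨j, hj⟩ := hEsurj _ ((hQp m hm).2 hpm)
    have := hc j
    rw [hj, cpos_add_natCast r (by omega)] at this
    exact ⟨j, by omega⟩

theorem eq_of_rightmostEdge (hr : P.Vert r) (hn : n = 2 * T + 1)
    (hfall : ∀ m < T, IsFall (P.horizRightward r) m → P.LeftNotch (r + ↑(2 * m + 2)))
    (hi : P.RightmostEdge i) : i = r := by
  by_contra hne
  obtain ⟨m, hm, hcpos⟩ := exists_cpos_eq_of_vert hr hn hi.1.1 hne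
  have hi' : i = r + ↑(2 * m + 2) := by rw [← hcpos, add_cpos]
  subst hi'
  exact (hfall m hm ((leftNotch_or_rightmostEdge_iff_isFall hr m).1 (.inr hi))).1.not_downward hi.1

theorem cpos_lt_of_fallingCornerAt (hP : P.BLS) (hr : P.Vert r) (hn : n = 2 * T + 1)
    (huniq : ∀ i, P.RightmostEdge i → i = r) {l : Fin (n + 1)} (hl : P.LeftmostEdge l)
    (hi : P.FallingCornerAt i) : cpos r l < cpos r i := by
  have hrm := hP.rightmostEdge_add_two hi
  have hir : i + 2 = r := huniq _ hrm
  obtain ⟨t, ht, hti⟩ := exists_cpos_eq_of_vert hr hn hi.1.1 fun h =>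
    P.add_two_ne i (hir.trans h.symm)
  obtain ⟨a, ha, hla⟩ := exists_cpos_eq_of_vert hr hn hl.1.1 fun h =>
    hl.1.not_downward (h ▸ hir ▸ hrm.1)
  have hlast : T ≤ t + 1 := by
    by_contra! hlt
    have := cpos_add_natCast r (t := 2 * t + 4) (by omega)
    rw [show r + ↑(2 * t + 4) = i + 2 by rw [← add_cpos r i, hti]; push_cast; ring, hir,
      cpos, sub_self] at this
    simp at this
  have hat : a ≠ t := by
    rintro rfl
    have hli : l = i := cpos_injective r (by rw [hla, hti])
    exact hl.1.not_downward (hli ▸ hi.1)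
  omega

end RectPolygon

open RectPolygon in
/-- Canonical ordering of the vertical special edges of a BLS-hole: starting at the unique
rightmost edge `R` and traversing clockwise, leftmost edges and left notches strictly
alternate as `R, L₁, N₂, L₂, …, N_k, L_k, R`; moreover any falling corner is traversed
between `L_k` and `R`. -/
theorem bls_canonical_ordering {n : ℕ} (P : RectPolygon n) (hP : P.BLS)
    (r : Fin (n + 1)) (hr : P.RightmostEdge r)
    (k : ℕ) (hk : 1 ≤ k)
    (L : Fin k → Fin (n + 1)) (hL : ∀ j, P.LeftmostEdge (L j))
    (hLsurj : ∀ i, P.LeftmostEdge i → ∃ j, L j = i)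
    (hLmono : StrictMono fun j => cpos r (L j))
    (N : Fin (k - 1) → Fin (n + 1)) (hN : ∀ j, P.LeftNotch (N j))
    (hNsurj : ∀ i, P.LeftNotch i → ∃ j, N j = i)
    (hNmono : StrictMono fun j => cpos r (N j)) :
    0 < cpos r (L ⟨0, hk⟩) ∧
    (∀ j : Fin (k - 1),
      cpos r (L (j.castLE (Nat.sub_le k 1))) < cpos r (N j) ∧
      cpos r (N j) < cpos r (L (Fin.cast (by omega) j.succ))) ∧
    (∀ i : Fin (n + 1), P.FallingCornerAt i → cpos r (L ⟨k - 1, by omega⟩) < cpos r i) := by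
  obtain ⟨hrd, hprev, hnext⟩ := hr
  have hrv : P.Vert r := hrd.1
  obtain ⟨T, hn⟩ : ∃ T, n = 2 * T + 1 := by
    obtain ⟨c, hc⟩ := P.even_succ_of_vert hrv
    exact ⟨c - 1, by omega⟩
  have hs0 : ¬ P.horizRightward r 0 := horizRightward_zero.not.2 hnext.not_rightward
  have hsT : P.horizRightward r T := (horizRightward_last hn).2 hprev
  have hne : ∀ i, P.Upward i → i ≠ r := fun i hi h => hi.not_downward (h ▸ hrd)
  obtain ⟨a, ha, hLa⟩ := exists_enumerates hrv hn (fun i hi => ⟨hi.1.1, hne i hi.1⟩)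
    (fun m _ => leftmostEdge_iff_isRise hP hrv m) hL hLsurj hLmono
  obtain ⟨b, hb, hNb⟩ := exists_enumerates hrv hn (fun i hi => ⟨hi.1.1, hne i hi.1⟩)
    (fun _ _ => Iff.rfl) hN hNsurj hNmono
  have hfall := ha.isFall_iff hs0 hsT hb
    (fun m _ h => (leftNotch_or_rightmostEdge_iff_isFall hrv m).1 (.inl h)) (by omega)
  have hb' : Enumerates b {m | m < T ∧ IsFall (P.horizRightward r) m} := by
    rwa [Set.ext fun m => and_congr_right (hfall m)]
  have huniq : ∀ i, P.RightmostEdge i → i = r :=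
    fun _ => eq_of_rightmostEdge hrv hn fun m hm => (hfall m hm).1
  refine ⟨by rw [hLa]; omega, fun j => ⟨?_, ?_⟩,
    fun i hi => cpos_lt_of_fallingCornerAt hP hrv hn huniq (hL _) hi⟩
  · have := (ha.isRise_lt_isFall_iff hs0 hb' (j.castLE (Nat.sub_le k 1)) j).2 le_rfl
    rw [hLa, hNb]
    omega
  · have := (hb'.isFall_lt_isRise_iff hs0 ha j (Fin.cast (by omega) j.succ)).2 j.val.lt_succ_self
    rw [hLa, hNb]
    omega
end
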